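/- Fix an integer N ≥ 2 and a sign sequence ε : {1,…,2N} → {−1,+1} with ε₂ = −ε₁. Fix real numbers x₃ < x₄ < ⋯ < x_{2N} and ξ < x₃. Then, as (x₁,x₂) → (ξ,ξ) with x₁ < x₂ (< x₃), one has lim [U_ε(x₁,…,x_{2N}) − (x₂−x₁)^{−1/2} Ü_ε(x₃,…,x_{2N})] / (x₂−x₁)^{1/2} = Ü_ε(x₃,…,x_{2N}) · ∑_{i=3}^{2N} (ε₁ ε_i) / (2(x_i−ξ)). -/

import Mathlib

/-- Conformal block function `U_ε(x) = ∏_{i<j}(x_j−x_i)^{ε_iε_j/2}`. -/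
noncomputable def Ublock {K : ℕ} (ε : Fin K → ℝ) (x : Fin K → ℝ) : ℝ :=
  ∏ i : Fin K, ∏ j ∈ Finset.Ioi i, (x j - x i) ^ (ε i * ε j / 2)

/-- Extend the `2N−2` fixed points `y = (x₃,…,x_{2N})` to `2N` points by
prepending `x₁ = a` and `x₂ = b`. -/
noncomputable def extendPts (N : ℕ) (a b : ℝ) (y : Fin (2*N - 2) → ℝ) : Fin (2*N) → ℝ :=
  fun i => if h0 : i.1 = 0 then a else if h1 : i.1 = 1 then b
    else y ⟨i.1 - 2, by have := i.isLt; omega⟩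

/-!
Since `ε₂ = -ε₁`, the factors of `U_ε` that involve `x₁` and `x₂` combine into
`(x₂ - x₁)^{-1/2} · h(x₁) / h(x₂)` with `h(t) = exp (∑ⱼ cⱼ log (xⱼ - t))`, `cⱼ = ε₁εⱼ/2`, so the
quotient in question equals `Ü_ε · (h(x₁)/h(x₂) - 1)/(x₂ - x₁)`. Both points move, so one needs
the strict derivative of `h` at `ξ`: it makes this quotient converge to
`-h'(ξ)/h(ξ) = ∑ⱼ cⱼ/(xⱼ - ξ)`.
-/

open Filter Topology Real

theorem HasDerivAtFilter.tendsto_slope {𝕜 F : Type*} [NontriviallyNormedField 𝕜]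
    [NormedAddCommGroup F] [NormedSpace 𝕜 F] {f : 𝕜 → F} {f' : F} {L : Filter (𝕜 × 𝕜)}
    (h : HasDerivAtFilter f f' L) :
    Tendsto (fun p => slope f p.2 p.1) (L ⊓ 𝓟 {p | p.1 ≠ p.2}) (𝓝 f') := by
  have hsmall := (hasDerivAtFilter_iff_isLittleO.mp h).tendsto_inv_smul_nhds_zero
  rw [← zero_add f']
  refine ((hsmall.mono_left inf_le_left).add_const f').congr' ?_
  filter_upwards [le_principal_iff.mp inf_le_right] with p hp
  rw [slope_def_module, smul_sub, smul_smul, inv_mul_cancel₀ (sub_ne_zero.mpr hp), one_smul,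
    sub_add_cancel]

theorem HasStrictDerivAt.tendsto_div_sub_one_div {𝕜 : Type*} [NontriviallyNormedField 𝕜]
    {h : 𝕜 → 𝕜} {h' x : 𝕜} (hh : HasStrictDerivAt h h' x) (hx : h x ≠ 0) :
    Tendsto (fun p : 𝕜 × 𝕜 => (h p.1 / h p.2 - 1) / (p.2 - p.1))
      (𝓝 (x, x) ⊓ 𝓟 {p | p.1 ≠ p.2}) (𝓝 (-h' / h x)) := by
  have hsnd : Tendsto (fun p : 𝕜 × 𝕜 => h p.2) (𝓝 (x, x) ⊓ 𝓟 {p | p.1 ≠ p.2}) (𝓝 (h x)) :=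
    (hh.hasDerivAt.continuousAt.tendsto.comp (continuous_snd.tendsto (x, x))).mono_left
      inf_le_left
  refine ((HasDerivAtFilter.tendsto_slope hh).neg.div hsnd hx).congr' ?_
  filter_upwards [le_principal_iff.mp inf_le_right, hsnd.eventually_ne hx] with p hp hp2
  simp only [Pi.div_apply, slope_def_field]
  field_simp [sub_ne_zero.mpr hp, sub_ne_zero.mpr hp.symm]
  ring

theorem hasStrictDerivAt_sum_mul_log_sub {ι : Type*} (s : Finset ι) (c y : ι → ℝ) {x : ℝ}
    (hx : ∀ j ∈ s, x < y j) :
    HasStrictDerivAt (fun t => ∑ j ∈ s, c j * log (y j - t)) (-∑ j ∈ s, c j / (y j - x)) x := by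
  rw [← Finset.sum_neg_distrib]
  refine HasStrictDerivAt.fun_sum fun j hj => ?_
  have := (((hasStrictDerivAt_id x).const_sub (y j)).log (sub_pos.mpr (hx j hj)).ne').const_mul
    (c j)
  simpa [div_eq_mul_inv] using this

theorem prod_rpow_eq_exp_sum {ι : Type*} (s : Finset ι) {f : ι → ℝ} (c : ι → ℝ)
    (hf : ∀ j ∈ s, 0 < f j) : ∏ j ∈ s, f j ^ c j = exp (∑ j ∈ s, c j * log (f j)) := by
  rw [exp_sum]
  exact Finset.prod_congr rfl fun j hj => by rw [rpow_def_of_pos (hf j hj), mul_comm]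

theorem rpow_neg_half_mul_sub_div_rpow_half {t : ℝ} (ht : 0 < t) (U E : ℝ) :
    (t ^ (-(1 / 2) : ℝ) * U * E - t ^ (-(1 / 2) : ℝ) * U) / t ^ (1 / 2 : ℝ) =
      U * ((E - 1) / t) := by
  have hsq : t ^ (1 / 2 : ℝ) * t ^ (1 / 2 : ℝ) = t := by rw [← rpow_add ht]; norm_num
  have hpos : 0 < t ^ (1 / 2 : ℝ) := rpow_pos_of_pos ht _
  rw [rpow_neg ht.le]
  field_simp
  rw [sq, hsq]
  ring

theorem Ublock_succ {n : ℕ} (ε x : Fin (n + 1) → ℝ) :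
    Ublock ε x = (∏ j : Fin n, (x j.succ - x 0) ^ (ε 0 * ε j.succ / 2)) *
      Ublock (fun i => ε i.succ) (fun i => x i.succ) := by
  unfold Ublock
  rw [Fin.prod_univ_succ, Fin.prod_Ioi_zero]
  congr 1
  exact Finset.prod_congr rfl fun i _ => by rw [Fin.prod_Ioi_succ]

theorem Ublock_comp_cast {K K' : ℕ} (h : K = K') (ε x : Fin K' → ℝ) :
    Ublock (ε ∘ Fin.cast h) (x ∘ Fin.cast h) = Ublock ε x := by
  subst h; rfl

theorem Ublock_cons_cons {n : ℕ} (ε : Fin (n + 2) → ℝ) (hsign : ε 1 = -ε 0) (a b : ℝ)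
    (y : Fin n → ℝ) (ha : ∀ j, a < y j) (hb : ∀ j, b < y j) :
    Ublock ε (Fin.cons a (Fin.cons b y)) =
      (b - a) ^ (ε 0 * ε 1 / 2) * Ublock (fun j => ε j.succ.succ) y *
        (exp (∑ j, ε 0 * ε j.succ.succ / 2 * log (y j - a)) /
          exp (∑ j, ε 0 * ε j.succ.succ / 2 * log (y j - b))) := by
  have hb' : ∏ j : Fin n, (y j - b) ^ (ε 1 * ε j.succ.succ / 2) =
      (exp (∑ j, ε 0 * ε j.succ.succ / 2 * log (y j - b)))⁻¹ := by
    rw [prod_rpow_eq_exp_sum _ _ fun j _ => sub_pos.mpr (hb j), ← exp_neg,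
      ← Finset.sum_neg_distrib]
    exact congrArg exp (Finset.sum_congr rfl fun j _ => by rw [hsign]; ring)
  rw [Ublock_succ, Ublock_succ, Fin.prod_univ_succ]
  simp only [Fin.cons_succ, Fin.cons_zero, Fin.succ_zero_eq_one, Fin.cons_one, hb',
    prod_rpow_eq_exp_sum _ _ fun j _ => sub_pos.mpr (ha j)]
  ring

theorem extendPts_comp_cast (N : ℕ) (h : 2 * N - 2 + 2 = 2 * N) (a b : ℝ)
    (y : Fin (2 * N - 2) → ℝ) :
    extendPts N a b y ∘ Fin.cast h = Fin.cons a (Fin.cons b y) := by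
  funext i
  induction i using Fin.cases with
  | zero => simp [extendPts]
  | succ j =>
    induction j using Fin.cases with
    | zero => simp [extendPts]
    | succ k =>
      simp only [Function.comp_apply, extendPts, Fin.cons_succ, Fin.val_cast, Fin.val_succ]
      rw [dif_neg (by omega), dif_neg (by omega)]
      exact congrArg y (Fin.ext (by simp))

theorem Ublock_extendPts {N : ℕ} (hN : 1 ≤ N) (ε : Fin (2 * N) → ℝ)
    (hε0 : ε ⟨0, by omega⟩ = 1 ∨ ε ⟨0, by omega⟩ = -1)
    (hsign : ε ⟨1, by omega⟩ = -ε ⟨0, by omega⟩) (a b : ℝ) (y : Fin (2 * N - 2) → ℝ)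
    (hab : a < b) (hb : ∀ j, b < y j) :
    Ublock ε (extendPts N a b y) =
      (b - a) ^ (-(1 / 2) : ℝ) * Ublock (fun i : Fin (2 * N - 2) => ε ⟨i.1 + 2, by omega⟩) y *
        (exp (∑ j : Fin (2 * N - 2),
            ε ⟨0, by omega⟩ * ε ⟨j.1 + 2, by omega⟩ / 2 * log (y j - a)) /
          exp (∑ j : Fin (2 * N - 2),
            ε ⟨0, by omega⟩ * ε ⟨j.1 + 2, by omega⟩ / 2 * log (y j - b))) := by
  have h : 2 * N - 2 + 2 = 2 * N := by omega
  have hε0' : (ε ∘ Fin.cast h) 0 = ε ⟨0, by omega⟩ := congrArg ε (Fin.ext (by simp))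
  have hε1' : (ε ∘ Fin.cast h) 1 = ε ⟨1, by omega⟩ := congrArg ε (Fin.ext (by simp))
  have hεs : ∀ j : Fin (2 * N - 2), (ε ∘ Fin.cast h) j.succ.succ = ε ⟨j.1 + 2, by omega⟩ :=
    fun j => congrArg ε (Fin.ext (by simp))
  have hexp : ε ⟨0, by omega⟩ * ε ⟨1, by omega⟩ / 2 = -(1 / 2) := by
    rcases hε0 with h0 | h0 <;> rw [hsign, h0] <;> norm_num
  rw [← Ublock_comp_cast h, extendPts_comp_cast,
    Ublock_cons_cons _ (by rw [hε0', hε1', hsign]) a b y (fun j => hab.trans (hb j)) hb]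
  simp only [hε0', hε1', hεs, hexp]

/-- Frobenius expansion of the conformal block `U_ε` when `ε₂ = −ε₁`:
as `(x₁,x₂) → (ξ,ξ)` with `x₁ < x₂ < x₃`,
`[U_ε(x) − (x₂−x₁)^{−1/2}Ü_ε(x₃,…,x_{2N})]/(x₂−x₁)^{1/2} →
  Ü_ε(x₃,…,x_{2N})·∑_{i=3}^{2N} ε₁ε_i/(2(x_i−ξ))`. -/
theorem statement12 (N : ℕ) (hN : 2 ≤ N)
    (ε : Fin (2*N) → ℝ) (hε : ∀ i, ε i = 1 ∨ ε i = -1)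
    (hsign : ε ⟨1, by omega⟩ = - ε ⟨0, by omega⟩)
    (y : Fin (2*N - 2) → ℝ) (hy : StrictMono y) (ξ : ℝ) (hξ : ξ < y ⟨0, by omega⟩) :
    Filter.Tendsto
      (fun p : ℝ × ℝ =>
        (Ublock ε (extendPts N p.1 p.2 y) -
          (p.2 - p.1) ^ (-(1/2) : ℝ) *
            Ublock (fun i : Fin (2*N - 2) => ε ⟨i.1 + 2, by have := i.isLt; omega⟩) y) /
          (p.2 - p.1) ^ ((1/2) : ℝ))
      ((nhds ξ ×ˢ nhds ξ) ⊓ Filter.principal {p : ℝ × ℝ | p.1 < p.2 ∧ p.2 < y ⟨0, by omega⟩})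
      (nhds (Ublock (fun i : Fin (2*N - 2) => ε ⟨i.1 + 2, by have := i.isLt; omega⟩) y *
        ∑ i : Fin (2*N - 2),
          ε ⟨0, by omega⟩ * ε ⟨i.1 + 2, by have := i.isLt; omega⟩ / (2 * (y i - ξ)))) := by
  set c : Fin (2 * N - 2) → ℝ := fun j => ε ⟨0, by omega⟩ * ε ⟨j.1 + 2, by omega⟩ / 2
  set U := Ublock (fun i : Fin (2 * N - 2) => ε ⟨i.1 + 2, by omega⟩) y
  have hy0 : ∀ j, y ⟨0, by omega⟩ ≤ y j := fun j => hy.monotone (Nat.zero_le _)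
  have hlog := hasStrictDerivAt_sum_mul_log_sub Finset.univ c y fun j _ => hξ.trans_le (hy0 j)
  have hlim := hlog.exp.tendsto_div_sub_one_div (exp_pos _).ne'
  have hF : (𝓝 ξ ×ˢ 𝓝 ξ) ⊓ 𝓟 {p : ℝ × ℝ | p.1 < p.2 ∧ p.2 < y ⟨0, by omega⟩} ≤
      𝓝 (ξ, ξ) ⊓ 𝓟 {p | p.1 ≠ p.2} := by
    rw [← nhds_prod_eq]
    exact inf_le_inf_left _ (principal_mono.mpr fun p hp => hp.1.ne)
  convert ((hlim.mono_left hF).const_mul U).congr' ?_ using 2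
  · field_simp
    simp only [c, div_div]
  · filter_upwards [le_principal_iff.mp inf_le_right] with p ⟨hab, hb⟩
    rw [Ublock_extendPts (by omega) ε (hε _) hsign p.1 p.2 y hab fun j => hb.trans_le (hy0 j)]
    exact (rpow_neg_half_mul_sub_div_rpow_half (sub_pos.mpr hab) _ _).symm
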